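/- arXiv:2304.06060 — 6 statements merged into one kernel-verified Lean document; each statement's English description precedes it below -/
import Mathlib

section
/- Let 0 < β < 1, λ > 0 and ξ ∈ ℝ. Then the complex-valued integral ∫₀^∞ (e^{iξx} − 1) x^{−1−β} e^{−λx} dx converges and equals Γ(−β)·((λ − iξ)^β − λ^β), where (λ − iξ)^β is the principal-branch complex power and Γ is the Gamma function (Γ(−β) is real and negative for 0 < β < 1). -/
open MeasureTheory Complex Set Filter Topology

/-- Real integrability of `x^a * exp(-(r*x))` on `(0,∞)` for `a > -1`, `r > 0`. -/
lemma gts_aux_intR {a r : ℝ} (ha : -1 < a) (hr : 0 < r) :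
    IntegrableOn (fun x : ℝ => x ^ a * Real.exp (-(r * x))) (Ioi (0:ℝ)) := by
  have h : IntegrableOn (fun x : ℝ => Real.exp (-x) * x ^ a) (Ioi (0:ℝ)) := by
    simpa using Real.GammaIntegral_convergent (s := a + 1) (by linarith)
  have h2 : IntegrableOn (fun x : ℝ => Real.exp (-(r * x)) * (r * x) ^ a) (Ioi (0:ℝ)) := by
    have := (integrableOn_Ioi_comp_mul_left_iff
      (fun x : ℝ => Real.exp (-x) * x ^ a) 0 hr).mpr
    simpa using this (by simpa using h)
  refine IntegrableOn.congr_fun (h2.const_mul ((r ^ a)⁻¹)) (fun x hx => ?_) measurableSet_Ioi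
  have hx0 : (0:ℝ) < x := hx
  rw [Real.mul_rpow hr.le hx0.le]
  have : (r:ℝ) ^ a ≠ 0 := (Real.rpow_pos_of_pos hr a).ne'
  field_simp

/-- `|e^{iθ} - 1| ≤ |θ|`. -/
lemma gts_aux_abs_exp_I (θ : ℝ) : ‖Complex.exp (Complex.I * θ) - 1‖ ≤ |θ| := by
  have h1 : Complex.exp (Complex.I * θ) - 1
      = (↑(Real.cos θ - 1) : ℂ) + ↑(Real.sin θ) * Complex.I := by
    rw [mul_comm, Complex.exp_mul_I, ← Complex.ofReal_cos, ← Complex.ofReal_sin]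
    push_cast; ring
  rw [h1, Complex.norm_add_mul_I]
  rw [show |θ| = Real.sqrt (θ ^ 2) from (Real.sqrt_sq_eq_abs θ).symm]
  apply Real.sqrt_le_sqrt
  have h2 : Real.sin θ ^ 2 + Real.cos θ ^ 2 = 1 := Real.sin_sq_add_cos_sq θ
  have h3 : 1 - θ ^ 2 / 2 ≤ Real.cos θ := Real.one_sub_sq_div_two_le_cos
  nlinarith

/-- Complex integrability of `x^a * exp((iξ - r) x)` on `(0,∞)`. -/
lemma gts_aux_meas (a : ℝ) (c : ℂ) :
    AEStronglyMeasurable (fun x : ℝ => ((x ^ a : ℝ) : ℂ) * Complex.exp (c * x))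
      (volume.restrict (Ioi (0:ℝ))) := by
  refine ContinuousOn.aestronglyMeasurable ?_ measurableSet_Ioi
  refine ContinuousOn.mul ?_ ?_
  · refine Complex.continuous_ofReal.comp_continuousOn ?_
    exact fun x hx => ((Real.continuousAt_rpow_const x a
      (Or.inl (ne_of_gt hx))).continuousWithinAt)
  · exact (Complex.continuous_exp.comp (continuous_const.mul Complex.continuous_ofReal)).continuousOn

lemma gts_aux_norm (a : ℝ) (r ξ : ℝ) {x : ℝ} (hx : 0 < x) :
    ‖((x ^ a : ℝ) : ℂ) * Complex.exp ((Complex.I * ξ - r) * x)‖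
      = x ^ a * Real.exp (-(r * x)) := by
  rw [norm_mul, Complex.norm_real, Real.norm_eq_abs,
    Complex.norm_exp, _root_.abs_of_nonneg (Real.rpow_nonneg hx.le a)]
  congr 1
  have : ((Complex.I * ξ - r) * x).re = -(r * x) := by
    simp [Complex.mul_re]
  rw [this]

lemma gts_aux_intC {a : ℝ} (ha : -1 < a) {r : ℝ} (hr : 0 < r) (ξ : ℝ) :
    IntegrableOn (fun x : ℝ => ((x ^ a : ℝ) : ℂ)
      * Complex.exp ((Complex.I * ξ - r) * x)) (Ioi (0:ℝ)) := by
  refine Integrable.mono' (gts_aux_intR ha hr) (gts_aux_meas a _) ?_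
  refine (ae_restrict_iff' measurableSet_Ioi).mpr (ae_of_all _ fun x hx => ?_)
  rw [gts_aux_norm a r ξ hx]

/-- derivative in ξ of the exponential factor -/
lemma gts_aux_hasDeriv_exp (r x ξ : ℝ) :
    HasDerivAt (fun ξ' : ℝ => Complex.exp ((Complex.I * ξ' - r) * x))
      ((Complex.I * x) * Complex.exp ((Complex.I * ξ - r) * x)) ξ := by
  have h1 : HasDerivAt (fun z : ℂ => (Complex.I * z - r) * x) (Complex.I * x) (ξ:ℂ) := by
    simpa using (((hasDerivAt_id (ξ:ℂ)).const_mul Complex.I).sub_const (r:ℂ)).mul_const (x:ℂ)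
  simpa [mul_comm] using h1.cexp.comp_ofReal

/-- derivative in x of the exponential factor -/
lemma gts_aux_hasDeriv_exp_x (c : ℂ) (x : ℝ) :
    HasDerivAt (fun x' : ℝ => Complex.exp (c * x')) (c * Complex.exp (c * x)) x := by
  have h1 : HasDerivAt (fun z : ℂ => c * z) c (x:ℂ) := by
    simpa using (hasDerivAt_id (x:ℂ)).const_mul c
  simpa [mul_comm] using h1.cexp.comp_ofReal

lemma gts_aux_rpow_succ {x : ℝ} (hx : 0 < x) (a : ℝ) :
    ((x ^ (a + 1) : ℝ) : ℂ) = ((x ^ a : ℝ) : ℂ) * (x : ℂ) := by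
  rw [Real.rpow_add_one hx.ne' a]; push_cast; ring

/-- differentiation under the integral sign for `J` -/
lemma gts_aux_J_deriv {β lam : ℝ} (hβ0 : 0 < β) (hβ1 : β < 1) (hlam : 0 < lam) (ξ : ℝ) :
    HasDerivAt (fun ξ' : ℝ => ∫ x in Ioi (0:ℝ),
        ((x ^ (-β) : ℝ) : ℂ) * Complex.exp ((Complex.I * ξ' - lam) * x))
      (Complex.I * ∫ x in Ioi (0:ℝ),
        ((x ^ (1 - β) : ℝ) : ℂ) * Complex.exp ((Complex.I * ξ - lam) * x)) ξ := by
  have key := hasDerivAt_integral_of_dominated_loc_of_deriv_le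
    (F := fun ξ' : ℝ => fun x : ℝ =>
      ((x ^ (-β) : ℝ) : ℂ) * Complex.exp ((Complex.I * ξ' - lam) * x))
    (F' := fun ξ' : ℝ => fun x : ℝ =>
      Complex.I * (((x ^ (1 - β) : ℝ) : ℂ) * Complex.exp ((Complex.I * ξ' - lam) * x)))
    (bound := fun x : ℝ => x ^ (1 - β) * Real.exp (-(lam * x)))
    (μ := volume.restrict (Ioi (0:ℝ))) (x₀ := ξ) (Metric.ball_mem_nhds ξ one_pos)
    (Eventually.of_forall fun ξ' => gts_aux_meas (-β) _)
    (gts_aux_intC (by linarith) hlam ξ)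
    (((gts_aux_meas (1 - β) _)).const_mul Complex.I)
    ?_ (gts_aux_intR (by linarith) hlam) ?_
  · convert key.2 using 1
    case e'_4 => rfl
    rw [← integral_const_mul]
  · refine (ae_restrict_iff' measurableSet_Ioi).mpr (ae_of_all _ fun x hx => fun ξ' _ => ?_)
    rw [norm_mul, Complex.norm_I, one_mul, gts_aux_norm (1 - β) lam ξ' hx]
  · refine (ae_restrict_iff' measurableSet_Ioi).mpr (ae_of_all _ fun x hx => fun ξ' _ => ?_)
    have h := (gts_aux_hasDeriv_exp lam x ξ').const_mul (((x ^ (-β) : ℝ) : ℂ))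
    convert h using 1
    case e'_4 => rfl
    rw [show (1:ℝ) - β = -β + 1 by ring, gts_aux_rpow_succ hx]
    ring

/-- the FTC relation between the `-β` and `1-β` integrals -/
lemma gts_aux_FTC {β lam : ℝ} (hβ0 : 0 < β) (hβ1 : β < 1) (hlam : 0 < lam) (ξ : ℝ) :
    ((lam : ℂ) - Complex.I * ξ) * ∫ x in Ioi (0:ℝ),
        ((x ^ (1 - β) : ℝ) : ℂ) * Complex.exp ((Complex.I * ξ - lam) * x)
      = ((1 : ℂ) - β) * ∫ x in Ioi (0:ℝ),
        ((x ^ (-β) : ℝ) : ℂ) * Complex.exp ((Complex.I * ξ - lam) * x) := by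
  set c : ℂ := Complex.I * ξ - lam with hc
  have h0 : (0:ℝ) < 1 - β := by linarith
  have hFTC := integral_Ioi_of_hasDerivAt_of_tendsto (a := (0:ℝ))
    (f := fun x : ℝ => ((x ^ (1 - β) : ℝ) : ℂ) * Complex.exp (c * x))
    (f' := fun x : ℝ => ((1 : ℂ) - β) * (((x ^ (-β) : ℝ) : ℂ) * Complex.exp (c * x))
      + c * (((x ^ (1 - β) : ℝ) : ℂ) * Complex.exp (c * x)))
    (m := 0) ?_ ?_ ?_ ?_
  · have hz : ((0:ℝ) ^ (1 - β) : ℝ) = 0 := Real.zero_rpow h0.ne'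
    rw [MeasureTheory.integral_add ((gts_aux_intC (by linarith) hlam ξ).const_mul _)
        ((gts_aux_intC (by linarith) hlam ξ).const_mul _),
      integral_const_mul, integral_const_mul] at hFTC
    simp only [hz, Complex.ofReal_zero, zero_mul, sub_zero] at hFTC
    have : (lam : ℂ) - Complex.I * ξ = -c := by rw [hc]; ring
    rw [this]
    linear_combination -hFTC
  · -- continuity at 0 from the right
    refine ContinuousAt.continuousWithinAt (ContinuousAt.mul ?_ ?_)
    · exact Complex.continuous_ofReal.continuousAt.comp
        (Real.continuousAt_rpow_const 0 (1 - β) (Or.inr h0.le))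
    · exact (Complex.continuous_exp.comp
        (continuous_const.mul Complex.continuous_ofReal)).continuousAt
  · intro x hx
    have h1 : HasDerivAt (fun x' : ℝ => ((x' ^ (1 - β) : ℝ) : ℂ))
        (((1 - β) * x ^ (1 - β - 1) : ℝ) : ℂ) x :=
      (Real.hasDerivAt_rpow_const (Or.inl (ne_of_gt hx))).ofReal_comp
    have h2 := gts_aux_hasDeriv_exp_x c x
    have := h1.mul h2
    convert this using 1
    case e'_4 => rfl
    case e'_8 => rfl
    have : (1 : ℝ) - β - 1 = -β := by ring
    rw [this]
    push_cast
    ring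
  · refine Integrable.add ((gts_aux_intC (by linarith) hlam ξ).const_mul _)
      ((gts_aux_intC (by linarith) hlam ξ).const_mul _)
  · -- tendsto 0 at top
    refine squeeze_zero_norm' ?_
      (tendsto_rpow_mul_exp_neg_mul_atTop_nhds_zero (1 - β) lam hlam)
    filter_upwards [Ioi_mem_atTop (0:ℝ)] with x hx
    rw [gts_aux_norm (1 - β) lam ξ hx]
    rw [neg_mul]

lemma gts_aux_w_ne {lam : ℝ} (hlam : 0 < lam) (ξ : ℝ) :
    ((lam : ℂ) - Complex.I * ξ) ≠ 0 := by
  intro h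
  have : ((lam : ℂ) - Complex.I * ξ).re = 0 := by rw [h]; simp
  simp [Complex.sub_re, Complex.mul_re] at this
  linarith

lemma gts_aux_w_slit {lam : ℝ} (hlam : 0 < lam) (ξ : ℝ) :
    ((lam : ℂ) - Complex.I * ξ) ∈ Complex.slitPlane := by
  refine Complex.mem_slitPlane_iff.mpr (Or.inl ?_)
  simp [Complex.sub_re, Complex.mul_re]
  exact hlam

/-- derivative of ξ ↦ (lam - I ξ)^c -/
lemma gts_aux_cpow_deriv {lam : ℝ} (hlam : 0 < lam) (c : ℂ) (ξ : ℝ) :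
    HasDerivAt (fun ξ' : ℝ => ((lam : ℂ) - Complex.I * ξ') ^ c)
      (c * ((lam : ℂ) - Complex.I * ξ) ^ (c - 1) * (-Complex.I)) ξ := by
  have h1 : HasDerivAt (fun z : ℂ => (lam : ℂ) - Complex.I * z) (-Complex.I) (ξ:ℂ) := by
    simpa using ((hasDerivAt_id ((ξ:ℝ):ℂ)).const_mul Complex.I).const_sub (lam:ℂ)
  exact (h1.cpow_const (gts_aux_w_slit hlam ξ)).comp_ofReal

lemma gts_integral_ofReal {μ : Measure ℝ} {f : ℝ → ℝ} :
    ∫ x, ((f x : ℝ) : ℂ) ∂μ = ((∫ x, f x ∂μ : ℝ) : ℂ) :=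
  integral_ofReal

/-- value of J -/
lemma gts_aux_Jval {β lam : ℝ} (hβ0 : 0 < β) (hβ1 : β < 1) (hlam : 0 < lam) (ξ : ℝ) :
    ∫ x in Ioi (0:ℝ), ((x ^ (-β) : ℝ) : ℂ) * Complex.exp ((Complex.I * ξ - lam) * x)
      = ((Real.Gamma (1 - β) : ℝ) : ℂ) * ((lam : ℂ) - Complex.I * ξ) ^ ((β : ℂ) - 1) := by
  set J : ℝ → ℂ := fun ξ' => ∫ x in Ioi (0:ℝ),
      ((x ^ (-β) : ℝ) : ℂ) * Complex.exp ((Complex.I * ξ' - lam) * x) with hJdef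
  set g : ℝ → ℂ := fun ξ' => J ξ' * ((lam : ℂ) - Complex.I * ξ') ^ ((1 : ℂ) - β) with hgdef
  have hg' : ∀ ξ' : ℝ, HasDerivAt g 0 ξ' := by
    intro ξ'
    have hd := (gts_aux_J_deriv hβ0 hβ1 hlam ξ').mul (gts_aux_cpow_deriv hlam ((1:ℂ) - β) ξ')
    convert hd using 1
    case e'_4 => rfl
    case e'_8 => rfl
    set w : ℂ := (lam : ℂ) - Complex.I * ξ' with hw
    set K : ℂ := ∫ x in Ioi (0:ℝ),
      ((x ^ (1 - β) : ℝ) : ℂ) * Complex.exp ((Complex.I * ξ' - lam) * x) with hK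
    have hftc : w * K = ((1:ℂ) - β) * J ξ' := gts_aux_FTC hβ0 hβ1 hlam ξ'
    have hsplit : w ^ ((1:ℂ) - β) = w * w ^ (-(β:ℂ)) := by
      rw [show (1:ℂ) - β = 1 + -(β:ℂ) by ring, Complex.cpow_add _ _ (gts_aux_w_ne hlam ξ'),
        Complex.cpow_one]
    have hexp : ((1:ℂ) - β) - 1 = -(β:ℂ) := by ring
    rw [hexp, hsplit]
    linear_combination (-Complex.I * w ^ (-(β:ℂ))) * hftc
  have hconst : ∀ ξ' : ℝ, g ξ' = g 0 :=
    fun ξ' => is_const_of_deriv_eq_zero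
      (fun y => (hg' y).differentiableAt) (fun y => (hg' y).deriv) ξ' 0
  have hJ0 : J 0 = ((((1/lam) ^ (1 - β) * Real.Gamma (1 - β) : ℝ)) : ℂ) := by
    have : J 0 = ∫ x in Ioi (0:ℝ),
        (((x ^ (-β) * Real.exp (-(lam * x)) : ℝ)) : ℂ) := by
      rw [hJdef]
      refine setIntegral_congr_fun measurableSet_Ioi (fun x _ => ?_)
      have : (Complex.I * (0:ℝ) - lam) * x = ((-(lam * x) : ℝ) : ℂ) := by push_cast; ring
      rw [this, ← Complex.ofReal_exp]
      push_cast; ring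
    rw [this]
    rw [gts_integral_ofReal]
    congr 1
    have := Real.integral_rpow_mul_exp_neg_mul_Ioi (a := 1 - β) (r := lam) (by linarith) hlam
    rw [show (1:ℝ) - β - 1 = -β by ring] at this
    exact this
  have hg0 : g 0 = ((Real.Gamma (1 - β) : ℝ) : ℂ) := by
    rw [hgdef]
    simp only [hJ0]
    have h1 : ((lam : ℂ) - Complex.I * (0:ℝ)) = ((lam : ℝ) : ℂ) := by push_cast; ring
    rw [h1]
    have h2 : ((lam : ℝ) : ℂ) ^ ((1:ℂ) - β) = (((lam ^ (1 - β) : ℝ)) : ℂ) := by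
      rw [Complex.ofReal_cpow hlam.le]
      push_cast; ring_nf
    rw [h2, ← Complex.ofReal_mul]
    congr 1
    rw [one_div, Real.inv_rpow hlam.le, mul_comm, ← mul_assoc,
      mul_inv_cancel₀ (Real.rpow_pos_of_pos hlam _).ne', one_mul]
  have hkey : J ξ * ((lam : ℂ) - Complex.I * ξ) ^ ((1 : ℂ) - β)
      = ((Real.Gamma (1 - β) : ℝ) : ℂ) := by
    have := hconst ξ
    rw [hg0] at this
    exact this
  have hinv : ((lam : ℂ) - Complex.I * ξ) ^ ((1 : ℂ) - β)
      * ((lam : ℂ) - Complex.I * ξ) ^ ((β : ℂ) - 1) = 1 := by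
    rw [← Complex.cpow_add _ _ (gts_aux_w_ne hlam ξ), show ((1:ℂ) - β) + ((β:ℂ) - 1) = 0 by ring,
      Complex.cpow_zero]
  calc J ξ = J ξ * (((lam : ℂ) - Complex.I * ξ) ^ ((1 : ℂ) - β)
      * ((lam : ℂ) - Complex.I * ξ) ^ ((β : ℂ) - 1)) := by rw [hinv, mul_one]
    _ = (J ξ * ((lam : ℂ) - Complex.I * ξ) ^ ((1 : ℂ) - β))
        * ((lam : ℂ) - Complex.I * ξ) ^ ((β : ℂ) - 1) := by ring
    _ = _ := by rw [hkey]

/-- integrability of the main integrand -/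
lemma gts_main_int {β lam : ℝ} (hβ0 : 0 < β) (hβ1 : β < 1) (hlam : 0 < lam) (ξ : ℝ) :
    IntegrableOn
      (fun x : ℝ => (Complex.exp (Complex.I * ξ * x) - 1) *
        ((x ^ (-1 - β) : ℝ) : ℂ) * Complex.exp (-lam * x)) (Ioi (0:ℝ)) := by
  refine Integrable.mono' ((gts_aux_intR (a := -β) (by linarith) hlam).const_mul |ξ|) ?_ ?_
  · refine ContinuousOn.aestronglyMeasurable ?_ measurableSet_Ioi
    refine ContinuousOn.mul (ContinuousOn.mul ?_ ?_) ?_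
    · exact ((Complex.continuous_exp.comp ((continuous_const.mul
        Complex.continuous_ofReal))).sub continuous_const).continuousOn
    · exact fun x hx => (Complex.continuous_ofReal.continuousAt.comp
        (Real.continuousAt_rpow_const x _ (Or.inl (ne_of_gt hx)))).continuousWithinAt
    · exact (Complex.continuous_exp.comp
        (continuous_const.mul Complex.continuous_ofReal)).continuousOn
  · refine (ae_restrict_iff' measurableSet_Ioi).mpr (ae_of_all _ fun x hx => ?_)
    have hx0 : (0:ℝ) < x := hx
    rw [norm_mul, norm_mul]
    have h1 : ‖Complex.exp (Complex.I * ξ * x) - 1‖ ≤ |ξ| * x := by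
      have := gts_aux_abs_exp_I (ξ * x)
      rw [abs_mul, abs_of_pos hx0] at this
      calc ‖Complex.exp (Complex.I * ξ * x) - 1‖
          = ‖Complex.exp (Complex.I * (ξ * x : ℝ)) - 1‖ := by
            push_cast; ring_nf
        _ ≤ |ξ| * x := this
    have h2 : ‖((x ^ (-1 - β) : ℝ) : ℂ)‖ = x ^ (-1 - β) := by
      rw [Complex.norm_real, Real.norm_eq_abs,
        _root_.abs_of_nonneg (Real.rpow_nonneg hx0.le _)]
    have h3 : ‖Complex.exp (-(lam:ℂ) * x)‖ = Real.exp (-(lam * x)) := by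
      rw [Complex.norm_exp]
      congr 1
      simp [Complex.mul_re]
    rw [h2, h3]
    have hxpow : |ξ| * x * x ^ (-1 - β) = |ξ| * x ^ (-β) := by
      rw [mul_assoc, mul_comm (x : ℝ) _, ← Real.rpow_add_one hx0.ne' (-1 - β),
        show (-1 - β + 1 : ℝ) = -β by ring]
    calc ‖Complex.exp (Complex.I * ξ * x) - 1‖ * x ^ (-1 - β) * Real.exp (-(lam * x))
        ≤ (|ξ| * x) * x ^ (-1 - β) * Real.exp (-(lam * x)) := by
          have := Real.exp_pos (-(lam * x))
          gcongr
        _ = |ξ| * (x ^ (-β) * Real.exp (-(lam * x))) := by rw [hxpow]; ring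

/-- derivative of the main integral -/
lemma gts_main_deriv {β lam : ℝ} (hβ0 : 0 < β) (hβ1 : β < 1) (hlam : 0 < lam) (ξ : ℝ) :
    HasDerivAt (fun ξ' : ℝ => ∫ x in Ioi (0:ℝ),
        (Complex.exp (Complex.I * ξ' * x) - 1) *
          ((x ^ (-1 - β) : ℝ) : ℂ) * Complex.exp (-lam * x))
      (Complex.I * ∫ x in Ioi (0:ℝ),
        ((x ^ (-β) : ℝ) : ℂ) * Complex.exp ((Complex.I * ξ - lam) * x)) ξ := by
  have key := hasDerivAt_integral_of_dominated_loc_of_deriv_le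
    (F := fun ξ' : ℝ => fun x : ℝ => (Complex.exp (Complex.I * ξ' * x) - 1) *
          ((x ^ (-1 - β) : ℝ) : ℂ) * Complex.exp (-lam * x))
    (F' := fun ξ' : ℝ => fun x : ℝ =>
      Complex.I * (((x ^ (-β) : ℝ) : ℂ) * Complex.exp ((Complex.I * ξ' - lam) * x)))
    (bound := fun x : ℝ => x ^ (-β) * Real.exp (-(lam * x)))
    (μ := volume.restrict (Ioi (0:ℝ))) (x₀ := ξ) (Metric.ball_mem_nhds ξ one_pos)
    (Eventually.of_forall fun ξ' => ((gts_main_int hβ0 hβ1 hlam ξ').1))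
    (gts_main_int hβ0 hβ1 hlam ξ)
    ((gts_aux_meas (-β) _).const_mul Complex.I)
    ?_ (gts_aux_intR (by linarith) hlam) ?_
  · convert key.2 using 1
    case e'_4 => rfl
    rw [← integral_const_mul]
  · refine (ae_restrict_iff' measurableSet_Ioi).mpr (ae_of_all _ fun x hx => fun ξ' _ => ?_)
    rw [norm_mul, Complex.norm_I, one_mul, gts_aux_norm (-β) lam ξ' hx]
  · refine (ae_restrict_iff' measurableSet_Ioi).mpr (ae_of_all _ fun x hx => fun ξ' _ => ?_)
    have hx0 : (0:ℝ) < x := hx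
    have h1 : HasDerivAt (fun ξ'' : ℝ => Complex.exp (Complex.I * ξ'' * x) - 1)
        ((Complex.I * x) * Complex.exp (Complex.I * ξ' * x)) ξ' := by
      have hz : HasDerivAt (fun z : ℂ => Complex.I * z * x) (Complex.I * x) (ξ':ℂ) := by
        simpa using ((hasDerivAt_id ((ξ':ℝ):ℂ)).const_mul Complex.I).mul_const (x:ℂ)
      simpa [mul_comm] using (hz.cexp.comp_ofReal).sub_const 1
    have h := (h1.mul_const (((x ^ (-1 - β) : ℝ) : ℂ))).mul_const (Complex.exp (-(lam:ℂ) * x))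
    convert h using 1
    case e'_4 => rfl
    rw [show (-β : ℝ) = -1 - β + 1 by ring, gts_aux_rpow_succ hx0,
      show (Complex.I * ξ' - lam) * x = Complex.I * ξ' * x + -(lam:ℂ) * x by ring,
      Complex.exp_add]
    ring

/-- For `0 < β < 1`, `λ > 0` and `ξ ∈ ℝ`, the integral
`∫₀^∞ (e^{iξx} − 1) x^{−1−β} e^{−λx} dx` converges and equals
`Γ(−β)·((λ − iξ)^β − λ^β)`, with the principal-branch complex power and the
Gamma function extended by `Γ(z) = Γ(z+1)/z`. -/
theorem gts_tempered_stable_integral (β lam ξ : ℝ) (hβ0 : 0 < β) (hβ1 : β < 1)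
    (hlam : 0 < lam) :
    IntegrableOn
      (fun x : ℝ => (Complex.exp (Complex.I * ξ * x) - 1) *
        ((x ^ (-1 - β) : ℝ) : ℂ) * Complex.exp (-lam * x)) (Set.Ioi 0) ∧
    ∫ x in Set.Ioi (0 : ℝ), (Complex.exp (Complex.I * ξ * x) - 1) *
        ((x ^ (-1 - β) : ℝ) : ℂ) * Complex.exp (-lam * x)
      = ((Real.Gamma (-β) : ℝ) : ℂ) *
          (((lam : ℂ) - Complex.I * ξ) ^ (β : ℂ) - (lam : ℂ) ^ (β : ℂ)) := by
  refine ⟨gts_main_int hβ0 hβ1 hlam ξ, ?_⟩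
  set D : ℝ → ℂ := fun ξ' => (∫ x in Ioi (0:ℝ),
      (Complex.exp (Complex.I * ξ' * x) - 1) *
        ((x ^ (-1 - β) : ℝ) : ℂ) * Complex.exp (-lam * x))
    - ((Real.Gamma (-β) : ℝ) : ℂ) *
        (((lam : ℂ) - Complex.I * ξ') ^ (β : ℂ) - (lam : ℂ) ^ (β : ℂ)) with hD
  have hGamma : ((Real.Gamma (1 - β) : ℝ) : ℂ)
      = -(β : ℂ) * ((Real.Gamma (-β) : ℝ) : ℂ) := by
    have := Real.Gamma_add_one (s := -β) (by linarith)
    rw [show (-β + 1 : ℝ) = 1 - β by ring] at this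
    rw [this]; push_cast; ring
  have hD' : ∀ ξ' : ℝ, HasDerivAt D 0 ξ' := by
    intro ξ'
    have h1 := gts_main_deriv hβ0 hβ1 hlam ξ'
    rw [gts_aux_Jval hβ0 hβ1 hlam ξ'] at h1
    have h2 : HasDerivAt (fun ξ'' : ℝ => ((Real.Gamma (-β) : ℝ) : ℂ) *
        (((lam : ℂ) - Complex.I * ξ'') ^ (β : ℂ) - (lam : ℂ) ^ (β : ℂ)))
        (((Real.Gamma (-β) : ℝ) : ℂ) *
          ((β : ℂ) * ((lam : ℂ) - Complex.I * ξ') ^ ((β : ℂ) - 1) * (-Complex.I))) ξ' :=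
      (((gts_aux_cpow_deriv hlam (β:ℂ) ξ').sub_const _).const_mul _)
    have h3 := h1.sub h2
    convert h3 using 1
    case e'_4 => rfl
    case e'_8 => rfl
    rw [hGamma]
    ring
  have hconst : ∀ ξ' : ℝ, D ξ' = D 0 :=
    fun ξ' => is_const_of_deriv_eq_zero
      (fun y => (hD' y).differentiableAt) (fun y => (hD' y).deriv) ξ' 0
  have hD0 : D 0 = 0 := by
    rw [hD]
    simp only []
    have hint : (∫ x in Ioi (0:ℝ), (Complex.exp (Complex.I * (0:ℝ) * x) - 1) *
        ((x ^ (-1 - β) : ℝ) : ℂ) * Complex.exp (-lam * x)) = 0 := by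
      rw [show (fun x : ℝ => (Complex.exp (Complex.I * (0:ℝ) * x) - 1) *
          ((x ^ (-1 - β) : ℝ) : ℂ) * Complex.exp (-lam * x)) = fun _ : ℝ => (0:ℂ) by
        funext x; simp]
      simp
    rw [hint]
    simp
  have := hconst ξ
  rw [hD0] at this
  exact sub_eq_zero.mp this
end

section
/- Let 0 < β₊ < 1, 0 < β₋ < 1, α₊ ≥ 0, α₋ ≥ 0, λ₊ > 0, λ₋ > 0, and let h be real with −λ₋ < h < λ₊. Then ∫_ℝ (e^{hx} − 1) v(x) dx converges and equals α₊Γ(−β₊)((λ₊ − h)^{β₊} − λ₊^{β₊}) + α₋Γ(−β₋)((λ₋ + h)^{β₋} − λ₋^{β₋}), where all powers are real powers of positive reals. -/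
open MeasureTheory Set Filter

/-- The GTS Lévy density with parameters `(β₊, β₋, α₊, α₋, λ₊, λ₋)`. -/
noncomputable def gtsLevyDensity (βp βm αp αm lp lm : ℝ) (x : ℝ) : ℝ :=
  if 0 < x then αp * Real.exp (-lp * x) * x ^ (-1 - βp)
  else if x < 0 then αm * Real.exp (-lm * |x|) * |x| ^ (-1 - βm)
  else 0

lemma exp_sub_exp_le' (a b x : ℝ) (ha : 0 < a) (hb : 0 < b) (hx : 0 ≤ x) :
    |Real.exp (-(a*x)) - Real.exp (-(b*x))| ≤ Real.exp (-(min a b * x)) * (|a - b| * x) := by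
  wlog hab : b ≤ a generalizing a b
  · rw [abs_sub_comm, min_comm, abs_sub_comm a b]; exact this b a hb ha (le_of_not_ge hab)
  have hmin : min a b = b := min_eq_right hab
  have h1 : Real.exp (-(a*x)) = Real.exp (-(b*x)) * Real.exp (-(a*x) - -(b*x)) := by
    rw [← Real.exp_add]; ring_nf
  have h3 : Real.exp (-(a*x) - -(b*x)) ≤ 1 := Real.exp_le_one_iff.mpr (by nlinarith)
  have h4 : 1 - Real.exp (-(a*x) - -(b*x)) ≤ (a - b) * x := by
    have := Real.add_one_le_exp (-(a*x) - -(b*x)); nlinarith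
  have h5 : Real.exp (-(b*x)) - Real.exp (-(a*x))
      = Real.exp (-(b*x)) * (1 - Real.exp (-(a*x) - -(b*x))) := by
    rw [h1]; ring
  rw [abs_sub_comm,
    abs_of_nonneg (by nlinarith [Real.exp_pos (-(b*x))] :
      (0:ℝ) ≤ Real.exp (-(b*x)) - Real.exp (-(a*x))), hmin,
    abs_of_nonneg (by nlinarith : (0:ℝ) ≤ a - b), h5]
  have := Real.exp_pos (-(b*x))
  nlinarith

lemma integrableOn_exp_mul_rpow {t p : ℝ} (ht : 0 < t) (hp : -1 < p) :
    IntegrableOn (fun x : ℝ => Real.exp (-(t * x)) * x ^ p) (Ioi (0:ℝ)) := by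
  have h0 : IntegrableOn (fun x : ℝ => Real.exp (-x) * x ^ p) (Ioi (0:ℝ)) := by
    have := Real.GammaIntegral_convergent (by linarith : 0 < p + 1)
    simpa using this
  have h1 : IntegrableOn (fun x : ℝ => Real.exp (-(t*x)) * (t*x) ^ p) (Ioi (0:ℝ)) := by
    have h := (integrableOn_Ioi_comp_mul_left_iff (fun x : ℝ => Real.exp (-x) * x ^ p) 0 ht)
    rw [mul_zero] at h
    simpa using h.mpr h0
  have h2 := h1.const_mul (t ^ (-p))
  refine IntegrableOn.congr_fun h2 (fun x hx => ?_) measurableSet_Ioi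
  have hx0 : (0:ℝ) < x := hx
  rw [Real.mul_rpow ht.le hx0.le, Real.rpow_neg ht.le]
  field_simp

lemma integral_exp_mul_rpow {t β : ℝ} (ht : 0 < t) (hβ : β < 1) :
    ∫ x in Ioi (0:ℝ), Real.exp (-(t * x)) * x ^ (-β) = t ^ (β - 1) * Real.Gamma (1 - β) := by
  have := Real.integral_rpow_mul_exp_neg_mul_Ioi (a := 1 - β) (r := t) (by linarith) ht
  rw [show (1:ℝ) - β - 1 = -β by ring] at this
  rw [show (∫ x in Ioi (0:ℝ), Real.exp (-(t * x)) * x ^ (-β))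
      = ∫ x in Ioi (0:ℝ), x ^ (-β) * Real.exp (-(t * x)) by
        exact setIntegral_congr_fun measurableSet_Ioi (fun x _ => mul_comm _ _), this,
    one_div, Real.inv_rpow ht.le, ← Real.rpow_neg ht.le, neg_sub]

lemma keyHalf {a b β : ℝ} (ha : 0 < a) (hb : 0 < b) (hβ0 : 0 < β) (hβ1 : β < 1) :
    IntegrableOn (fun x : ℝ => (Real.exp (-(a*x)) - Real.exp (-(b*x))) * x ^ (-1-β)) (Ioi (0:ℝ)) ∧
    ∫ x in Ioi (0:ℝ), (Real.exp (-(a*x)) - Real.exp (-(b*x))) * x ^ (-1-β)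
      = Real.Gamma (-β) * (a ^ β - b ^ β) := by
  have hβne : β ≠ 0 := ne_of_gt hβ0
  set c := min a b with hc
  have hc0 : 0 < c := lt_min ha hb
  have hg2 : IntegrableOn
      (fun x : ℝ => (Real.exp (-(a*x)) - Real.exp (-(b*x))) * x ^ (-1-β)) (Ioi (0:ℝ)) := by
    have hbound : IntegrableOn
        (fun x : ℝ => |a - b| * (Real.exp (-(c*x)) * x ^ (-β))) (Ioi (0:ℝ)) :=
      (integrableOn_exp_mul_rpow hc0 (by linarith : (-1:ℝ) < -β)).const_mul _
    refine Integrable.mono' hbound ?_ ?_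
    · refine (ContinuousOn.mul (by fun_prop) ?_).aestronglyMeasurable measurableSet_Ioi
      intro x hx
      exact (Real.continuousAt_rpow_const x _ (Or.inl (ne_of_gt hx))).continuousWithinAt
    · filter_upwards [ae_restrict_mem measurableSet_Ioi] with x hx
      have hx0 : (0:ℝ) < x := hx
      have hrw : x * x ^ ((-1:ℝ)-β) = x ^ (-β) := by
        have h := Real.rpow_add hx0 1 (-1-β)
        rw [Real.rpow_one] at h
        rw [← h]; congr 1; ring
      have hr0 : (0:ℝ) ≤ x ^ ((-1:ℝ)-β) := Real.rpow_nonneg hx0.le _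
      rw [Real.norm_eq_abs, abs_mul, abs_of_nonneg hr0]
      calc |Real.exp (-(a*x)) - Real.exp (-(b*x))| * x ^ ((-1:ℝ)-β)
          ≤ (Real.exp (-(c*x)) * (|a - b| * x)) * x ^ ((-1:ℝ)-β) :=
            mul_le_mul_of_nonneg_right (exp_sub_exp_le' a b x ha hb hx0.le) hr0
        _ = |a - b| * (Real.exp (-(c*x)) * (x * x ^ ((-1:ℝ)-β))) := by ring
        _ = |a - b| * (Real.exp (-(c*x)) * x ^ (-β)) := by rw [hrw]
  refine ⟨hg2, ?_⟩
  set f : ℝ → ℝ := fun x => (Real.exp (-(a*x)) - Real.exp (-(b*x))) * (x ^ (-β) * (-β)⁻¹) with hf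
  set g1 : ℝ → ℝ := fun x =>
    (-a * Real.exp (-(a*x)) + b * Real.exp (-(b*x))) * (x ^ (-β) * (-β)⁻¹) with hg1def
  set g2 : ℝ → ℝ := fun x => (Real.exp (-(a*x)) - Real.exp (-(b*x))) * x ^ (-1-β) with hg2def
  have hf0 : f 0 = 0 := by simp [hf]
  have hderiv : ∀ x ∈ Ioi (0:ℝ), HasDerivAt f (g1 x + g2 x) x := by
    intro x hx
    have hx0 : (0:ℝ) < x := hx
    have hu1 : HasDerivAt (fun y : ℝ => Real.exp (-(a*y))) (Real.exp (-(a*x)) * (-a)) x := by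
      have h : HasDerivAt (fun y : ℝ => -(a*y)) (-a) x := by
        have := ((hasDerivAt_id x).const_mul a).neg; rw [mul_one] at this; exact this
      exact h.exp
    have hu2 : HasDerivAt (fun y : ℝ => Real.exp (-(b*y))) (Real.exp (-(b*x)) * (-b)) x := by
      have h : HasDerivAt (fun y : ℝ => -(b*y)) (-b) x := by
        have := ((hasDerivAt_id x).const_mul b).neg; rw [mul_one] at this; exact this
      exact h.exp
    have hv : HasDerivAt (fun y : ℝ => y ^ (-β) * (-β)⁻¹) ((-β) * x ^ (-β-1) * (-β)⁻¹) x :=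
      (Real.hasDerivAt_rpow_const (Or.inl (ne_of_gt hx0))).mul_const _
    have H := (hu1.sub hu2).mul hv
    refine H.congr_deriv ?_
    have hex : x ^ ((-1:ℝ)-β) = x ^ (-β-1 : ℝ) := by congr 1; ring
    simp only [hg1def, hg2def, hex, Pi.sub_apply]
    field_simp
    ring
  have hcont : ContinuousWithinAt f (Ici (0:ℝ)) 0 := by
    have h0 : Tendsto f (nhdsWithin 0 (Ici (0:ℝ))) (nhds 0) := by
      apply squeeze_zero_norm' (a := fun x : ℝ => (|a-b| * |(-β)⁻¹|) * x ^ (1-β))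
        (t₀ := nhdsWithin 0 (Ici (0:ℝ)))
      · filter_upwards [self_mem_nhdsWithin] with x (hx : x ∈ Ici (0:ℝ))
        rcases eq_or_lt_of_le (mem_Ici.mp hx) with h | h
        · rw [Real.norm_eq_abs, hf]
          simp [← h, Real.zero_rpow (by linarith : (1:ℝ) - β ≠ 0),
            Real.zero_rpow (by intro hh; apply hβne; linarith [neg_eq_zero.mp hh] : (-β:ℝ) ≠ 0)]
        · have hrw : x * x ^ (-β : ℝ) = x ^ ((1:ℝ)-β) := by
            have hh := Real.rpow_add h 1 (-β)
            rw [Real.rpow_one] at hh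
            rw [← hh, sub_eq_add_neg]
          have hb1 : |Real.exp (-(a*x)) - Real.exp (-(b*x))| ≤ |a - b| * x := by
            have h1 := exp_sub_exp_le' a b x ha hb h.le
            have h2 : Real.exp (-(c*x)) ≤ 1 :=
              Real.exp_le_one_iff.mpr (by nlinarith)
            nlinarith [abs_nonneg (a-b), h.le,
              mul_nonneg (abs_nonneg (a-b)) h.le, Real.exp_pos (-(c*x))]
          have hr0 : (0:ℝ) ≤ x ^ (-β : ℝ) := Real.rpow_nonneg h.le _
          rw [Real.norm_eq_abs, hf]
          calc |(Real.exp (-(a*x)) - Real.exp (-(b*x))) * (x ^ (-β) * (-β)⁻¹)|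
              = |Real.exp (-(a*x)) - Real.exp (-(b*x))| * (x ^ (-β) * |(-β)⁻¹|) := by
                rw [abs_mul, abs_mul, abs_of_nonneg hr0]
            _ ≤ (|a - b| * x) * (x ^ (-β) * |(-β)⁻¹|) := by
                apply mul_le_mul_of_nonneg_right hb1
                positivity
            _ = (|a-b| * |(-β)⁻¹|) * (x * x ^ (-β)) := by ring
            _ = (|a-b| * |(-β)⁻¹|) * x ^ ((1:ℝ)-β) := by rw [hrw]
      · have hct : ContinuousAt (fun x : ℝ => x ^ ((1:ℝ)-β)) 0 :=
          Real.continuousAt_rpow_const 0 _ (Or.inr (by linarith))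
        have := (hct.tendsto.mono_left
          (nhdsWithin_le_nhds (s := Ici (0:ℝ)))).const_mul (|a-b| * |(-β)⁻¹|)
        simpa [Real.zero_rpow (by linarith : (1:ℝ) - β ≠ 0)] using this
    unfold ContinuousWithinAt
    rw [hf0]
    exact h0
  have htop : Tendsto f atTop (nhds 0) := by
    apply squeeze_zero_norm'
      (a := fun x : ℝ => (Real.exp (-(a*x)) + Real.exp (-(b*x))) * |(-β)⁻¹|)
    · filter_upwards [eventually_ge_atTop (1:ℝ)] with x hx1
      have hx0 : (0:ℝ) < x := by linarith
      have hr1 : x ^ (-β : ℝ) ≤ 1 :=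
        Real.rpow_le_one_of_one_le_of_nonpos hx1 (by linarith)
      have hr0 : (0:ℝ) ≤ x ^ (-β : ℝ) := Real.rpow_nonneg hx0.le _
      have htri : |Real.exp (-(a*x)) - Real.exp (-(b*x))|
          ≤ Real.exp (-(a*x)) + Real.exp (-(b*x)) := by
        have := abs_sub (Real.exp (-(a*x))) (Real.exp (-(b*x)))
        rw [abs_of_nonneg (Real.exp_pos _).le, abs_of_nonneg (Real.exp_pos _).le] at this
        exact this
      rw [Real.norm_eq_abs, hf]
      calc |(Real.exp (-(a*x)) - Real.exp (-(b*x))) * (x ^ (-β) * (-β)⁻¹)|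
          = |Real.exp (-(a*x)) - Real.exp (-(b*x))| * (x ^ (-β) * |(-β)⁻¹|) := by
            rw [abs_mul, abs_mul, abs_of_nonneg hr0]
        _ ≤ (Real.exp (-(a*x)) + Real.exp (-(b*x))) * (1 * |(-β)⁻¹|) := by
            apply mul_le_mul htri (by nlinarith [abs_nonneg ((-β)⁻¹)]) (by positivity)
              (by positivity)
        _ = (Real.exp (-(a*x)) + Real.exp (-(b*x))) * |(-β)⁻¹| := by ring
    · have h1 : Tendsto (fun x : ℝ => Real.exp (-(a*x))) atTop (nhds 0) := by
        apply Real.tendsto_exp_atBot.comp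
        exact (tendsto_neg_atTop_atBot.comp (tendsto_id.const_mul_atTop ha))
      have h2 : Tendsto (fun x : ℝ => Real.exp (-(b*x))) atTop (nhds 0) := by
        apply Real.tendsto_exp_atBot.comp
        exact (tendsto_neg_atTop_atBot.comp (tendsto_id.const_mul_atTop hb))
      simpa using (h1.add h2).mul_const |(-β)⁻¹|
  have hg1int : IntegrableOn g1 (Ioi (0:ℝ)) := by
    have e1 := (integrableOn_exp_mul_rpow ha (by linarith : (-1:ℝ) < -β)).const_mul (-a * (-β)⁻¹)
    have e2 := (integrableOn_exp_mul_rpow hb (by linarith : (-1:ℝ) < -β)).const_mul (b * (-β)⁻¹)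
    refine IntegrableOn.congr_fun (e1.add e2) (fun x _ => ?_) measurableSet_Ioi
    simp only [hg1def, Pi.add_apply]; ring
  have hsum : IntegrableOn (fun x => g1 x + g2 x) (Ioi (0:ℝ)) := hg1int.add hg2
  have hFTC := integral_Ioi_of_hasDerivAt_of_tendsto hcont hderiv hsum htop
  rw [hf0, MeasureTheory.integral_add hg1int hg2] at hFTC
  have hint1 : ∫ x in Ioi (0:ℝ), g1 x
      = (-a * (-β)⁻¹) * (a ^ (β-1) * Real.Gamma (1-β))
        + (b * (-β)⁻¹) * (b ^ (β-1) * Real.Gamma (1-β)) := by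
    have e1 := (integrableOn_exp_mul_rpow ha (by linarith : (-1:ℝ) < -β)).const_mul (-a * (-β)⁻¹)
    have e2 := (integrableOn_exp_mul_rpow hb (by linarith : (-1:ℝ) < -β)).const_mul (b * (-β)⁻¹)
    have hcg : ∫ x in Ioi (0:ℝ), g1 x
        = ∫ x in Ioi (0:ℝ), ((-a * (-β)⁻¹) * (Real.exp (-(a*x)) * x ^ (-β))
            + (b * (-β)⁻¹) * (Real.exp (-(b*x)) * x ^ (-β))) := by
      refine setIntegral_congr_fun measurableSet_Ioi (fun x _ => ?_)
      simp only [hg1def, Pi.add_apply]; ring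
    rw [hcg, MeasureTheory.integral_add e1 e2, integral_const_mul,
      integral_const_mul, integral_exp_mul_rpow ha hβ1,
      integral_exp_mul_rpow hb hβ1]
  have hΓ : Real.Gamma (1-β) = -β * Real.Gamma (-β) := by
    rw [show (1:ℝ)-β = -β + 1 by ring, Real.Gamma_add_one (by simpa using hβne)]
  have haa : a * a ^ (β - 1) = a ^ β := by
    nth_rewrite 1 [← Real.rpow_one a]
    rw [← Real.rpow_add ha]; congr 1; ring
  have hbb : b * b ^ (β - 1) = b ^ β := by
    nth_rewrite 1 [← Real.rpow_one b]
    rw [← Real.rpow_add hb]; congr 1; ring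
  have hg2val : ∫ x in Ioi (0:ℝ), g2 x = -(∫ x in Ioi (0:ℝ), g1 x) := by linarith
  show ∫ x in Ioi (0:ℝ), g2 x = Real.Gamma (-β) * (a ^ β - b ^ β)
  rw [hg2val, hint1, hΓ, ← haa, ← hbb]
  field_simp
  ring

lemma integrableOn_comp_neg_of_integrableOn {g : ℝ → ℝ} (hg : IntegrableOn g (Ioi (0:ℝ))) :
    IntegrableOn (fun x => g (-x)) (Iio (0:ℝ)) := by
  have A : MeasurableEmbedding (fun x : ℝ => -x) :=
    (Homeomorph.neg ℝ).isClosedEmbedding.measurableEmbedding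
  have hmap : (volume.restrict (Ioi (0:ℝ))).map (fun x : ℝ => -x)
      = volume.restrict (Iio (0:ℝ)) := by
    conv_rhs => rw [← Measure.map_neg_eq_self (volume : Measure ℝ),
      Measure.restrict_map A.measurable measurableSet_Iio]
    congr 1
    simp
  rw [IntegrableOn, ← hmap, A.integrable_map_iff]
  simpa [Function.comp_def] using hg.integrable

/-- For `−λ₋ < h < λ₊`, the integral `∫_ℝ (e^{hx} − 1) v(x) dx` converges and equals
`α₊Γ(−β₊)((λ₊ − h)^{β₊} − λ₊^{β₊}) + α₋Γ(−β₋)((λ₋ + h)^{β₋} − λ₋^{β₋})`,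
with real powers of positive reals. -/
theorem gts_real_cumulant_integral (βp βm αp αm lp lm h : ℝ)
    (hβp0 : 0 < βp) (hβp1 : βp < 1) (hβm0 : 0 < βm) (hβm1 : βm < 1)
    (hαp : 0 ≤ αp) (hαm : 0 ≤ αm) (hlp : 0 < lp) (hlm : 0 < lm)
    (hh1 : -lm < h) (hh2 : h < lp) :
    Integrable (fun x : ℝ => (Real.exp (h * x) - 1) * gtsLevyDensity βp βm αp αm lp lm x) ∧
    ∫ x : ℝ, (Real.exp (h * x) - 1) * gtsLevyDensity βp βm αp αm lp lm x
      = αp * Real.Gamma (-βp) * ((lp - h) ^ βp - lp ^ βp)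
        + αm * Real.Gamma (-βm) * ((lm + h) ^ βm - lm ^ βm) := by
  set F : ℝ → ℝ := fun x => (Real.exp (h * x) - 1) * gtsLevyDensity βp βm αp αm lp lm x with hF
  have hap : 0 < lp - h := by linarith
  have ham : 0 < lm + h := by linarith
  obtain ⟨hIp, hVp⟩ := keyHalf hap hlp hβp0 hβp1
  obtain ⟨hIm, hVm⟩ := keyHalf ham hlm hβm0 hβm1
  have hposEq : ∀ x ∈ Ioi (0:ℝ), F x
      = αp * ((Real.exp (-((lp-h)*x)) - Real.exp (-(lp*x))) * x ^ (-1-βp)) := by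
    intro x hx
    have hx0 : (0:ℝ) < x := hx
    simp only [hF, gtsLevyDensity, if_pos hx0, neg_mul]
    rw [show -((lp-h)*x) = h*x + -(lp*x) by ring, Real.exp_add]
    ring
  have hnegEq : ∀ x ∈ Ioi (0:ℝ), F (-x)
      = αm * ((Real.exp (-((lm+h)*x)) - Real.exp (-(lm*x))) * x ^ (-1-βm)) := by
    intro x hx
    have hx0 : (0:ℝ) < x := hx
    simp only [hF, gtsLevyDensity, neg_mul]
    rw [if_neg (by simp [hx0.le] : ¬ (0:ℝ) < -x), if_pos (by simpa using hx0 : -x < (0:ℝ)),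
      abs_neg, abs_of_pos hx0]
    rw [show -((lm+h)*x) = h*(-x) + -(lm*x) by ring, Real.exp_add]
    ring
  have hIntPos : IntegrableOn F (Ioi (0:ℝ)) :=
    IntegrableOn.congr_fun (hIp.const_mul αp) (fun x hx => (hposEq x hx).symm) measurableSet_Ioi
  have hIntNegAux : IntegrableOn (fun x => F (-x)) (Ioi (0:ℝ)) :=
    IntegrableOn.congr_fun (hIm.const_mul αm) (fun x hx => (hnegEq x hx).symm) measurableSet_Ioi
  have hIntNeg : IntegrableOn F (Iio (0:ℝ)) := by
    have := integrableOn_comp_neg_of_integrableOn hIntNegAux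
    simpa using this
  have hIntIic : IntegrableOn F (Iic (0:ℝ)) := by
    rw [integrableOn_Iic_iff_integrableOn_Iio]; exact hIntNeg
  have hInt : Integrable F := by
    rw [← integrableOn_univ, ← Set.Iic_union_Ioi (a := (0:ℝ))]
    exact hIntIic.union hIntPos
  refine ⟨hInt, ?_⟩
  have hsplit : ∫ x, F x = (∫ x in Iic (0:ℝ), F x) + ∫ x in Ioi (0:ℝ), F x := by
    rw [← integral_add_compl measurableSet_Iic hInt, compl_Iic]
  have hIoiVal : ∫ x in Ioi (0:ℝ), F x
      = αp * Real.Gamma (-βp) * ((lp - h) ^ βp - lp ^ βp) := by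
    rw [setIntegral_congr_fun measurableSet_Ioi hposEq, integral_const_mul, hVp]
    ring
  have hIicVal : ∫ x in Iic (0:ℝ), F x
      = αm * Real.Gamma (-βm) * ((lm + h) ^ βm - lm ^ βm) := by
    have hcn := integral_comp_neg_Ioi (0:ℝ) F
    rw [neg_zero] at hcn
    rw [← hcn, setIntegral_congr_fun measurableSet_Ioi hnegEq, integral_const_mul, hVm]
    ring
  rw [hsplit, hIoiVal, hIicVal]
  ring
end

section
/- (Theorem 2: the Esscher transform of a GTS law is again GTS with tilted rates λ₊ − h and λ₋ + h.) Let μ ∈ ℝ, β₊, β₋ ∈ (0,1), α₊, α₋ ≥ 0, λ₊, λ₋ > 0, and let f : ℝ → ℝ be a nonnegative measurable function such that for every u with −λ₋ < u < λ₊ one has ∫_ℝ e^{ux} f(x) dx = exp(m(u; μ, β₊, β₋, α₊, α₋, λ₊, λ₋)). Fix h with −λ₋ < h < λ₊ and define the Esscher density f̂(x) = e^{hx} f(x) / exp(m(h)). Then for every z with −(λ₋ + h) < z < λ₊ − h, ∫_ℝ e^{zx} f̂(x) dx = exp(m(z; μ, β₊, β₋, α₊, α₋, λ₊ − h, λ₋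 + h)); that is, f̂ has the exponential-moment structure of the GTS distribution with parameters (μ, β₊, β₋, α₊, α₋, λ₊ − h, λ₋ + h). -/
open MeasureTheory Set

/-- The real GTS cumulant function with parameters `(μ, β₊, β₋, α₊, α₋, λ₊, λ₋)`,
defined for `−λ₋ < u < λ₊`:
`m(u) = μu + α₊Γ(−β₊)((λ₊ − u)^{β₊} − λ₊^{β₊}) + α₋Γ(−β₋)((λ₋ + u)^{β₋} − λ₋^{β₋})`. -/
noncomputable def gtsCumulant (μ βp βm αp αm lp lm : ℝ) (u : ℝ) : ℝ :=
  μ * u + αp * Real.Gamma (-βp) * ((lp - u) ^ βp - lp ^ βp)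
    + αm * Real.Gamma (-βm) * ((lm + u) ^ βm - lm ^ βm)

/-- Theorem 2: the Esscher transform of a GTS law is again GTS with tilted rates
`λ₊ − h` and `λ₋ + h`.  If `f` has GTS exponential-moment structure on `(−λ₋, λ₊)`,
then the Esscher density `f̂(x) = e^{hx} f(x)/exp(m(h))` satisfies, for every `z`
with `−(λ₋ + h) < z < λ₊ − h`,
`∫ e^{zx} f̂(x) dx = exp(m(z; μ, β₊, β₋, α₊, α₋, λ₊ − h, λ₋ + h))`. -/
theorem gts_esscher_transform (μ βp βm αp αm lp lm : ℝ)
    (hβp0 : 0 < βp) (hβp1 : βp < 1) (hβm0 : 0 < βm) (hβm1 : βm < 1)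
    (hαp : 0 ≤ αp) (hαm : 0 ≤ αm) (hlp : 0 < lp) (hlm : 0 < lm)
    (f : ℝ → ℝ) (hf_nonneg : ∀ x, 0 ≤ f x) (hf_meas : Measurable f)
    (hf_mgf : ∀ u : ℝ, -lm < u → u < lp →
      ∫ x : ℝ, Real.exp (u * x) * f x = Real.exp (gtsCumulant μ βp βm αp αm lp lm u))
    (h : ℝ) (hh1 : -lm < h) (hh2 : h < lp) :
    ∀ z : ℝ, -(lm + h) < z → z < lp - h →
      ∫ x : ℝ, Real.exp (z * x) *
          (Real.exp (h * x) * f x / Real.exp (gtsCumulant μ βp βm αp αm lp lm h))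
        = Real.exp (gtsCumulant μ βp βm αp αm (lp - h) (lm + h) z) := by
  intro z hz1 hz2
  have key : ∫ x : ℝ, Real.exp ((z + h) * x) * f x
      = Real.exp (gtsCumulant μ βp βm αp αm lp lm (z + h)) := by
    refine hf_mgf (z + h) (by linarith) (by linarith)
  have heq : ∀ x : ℝ, Real.exp (z * x) *
      (Real.exp (h * x) * f x / Real.exp (gtsCumulant μ βp βm αp αm lp lm h))
      = (Real.exp ((z + h) * x) * f x) / Real.exp (gtsCumulant μ βp βm αp αm lp lm h) := by
    intro x
    rw [add_mul, Real.exp_add]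
    ring
  simp_rw [heq]
  rw [integral_div, key, ← Real.exp_sub]
  congr 1
  simp only [gtsCumulant]
  have e1 : lp - (z + h) = lp - h - z := by ring
  have e2 : lm + (z + h) = lm + h + z := by ring
  rw [e1, e2]
  ring
end

section
/- Let μ ∈ ℝ, β₊, β₋ ∈ (0,1), α₊ ≥ 0, α₋ ≥ 0 with α₊ + α₋ > 0, λ₋ > 0 and λ₊ > 1. Define ψ(h) = m(h+1) − m(h) for h ∈ (−λ₋, λ₊ − 1), where m is the real GTS cumulant function with parameters (μ, β₊, β₋, α₊, α₋, λ₊, λ₋). Then ψ is continuous and strictly increasing on (−λ₋, λ₊ − 1); consequently, for every r ∈ ℝ there is at most one h* ∈ (−λ₋, λ₊ − 1) with ψ(h*) = r (uniqueness of the Esscher martingale parameter). -/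
open MeasureTheory Set

private lemma key_anti {β : ℝ} (hβ0 : 0 < β) (hβ1 : β < 1) :
    StrictAntiOn (fun x : ℝ => (x + 1) ^ β - x ^ β) (Set.Ioi 0) := by
  apply strictAntiOn_of_deriv_neg (convex_Ioi 0)
  · exact (((Real.continuous_rpow_const hβ0.le).comp (continuous_id.add continuous_const)).sub
      (Real.continuous_rpow_const hβ0.le)).continuousOn
  · intro x hx
    rw [interior_Ioi] at hx
    have hx0 : (0:ℝ) < x := hx
    have h1 : HasDerivAt (fun x : ℝ => (x + 1) ^ β) (β * (x + 1) ^ (β - 1) * 1) x := by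
      exact (Real.hasDerivAt_rpow_const (Or.inl (by positivity))).comp x
        ((hasDerivAt_id x).add_const 1)
    have h2 : HasDerivAt (fun x : ℝ => x ^ β) (β * x ^ (β - 1)) x :=
      Real.hasDerivAt_rpow_const (Or.inl hx0.ne')
    rw [show deriv (fun x : ℝ => (x + 1) ^ β - x ^ β) x = _ from (h1.sub h2).deriv]
    have hlt : (x + 1) ^ (β - 1) < x ^ (β - 1) :=
      Real.rpow_lt_rpow_of_neg hx0 (by linarith) (by linarith)
    nlinarith

private lemma gamma_neg {β : ℝ} (hβ0 : 0 < β) (hβ1 : β < 1) : Real.Gamma (-β) < 0 := by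
  have h1 : Real.Gamma (-β + 1) = -β * Real.Gamma (-β) :=
    Real.Gamma_add_one (by linarith)
  have h2 : 0 < Real.Gamma (-β + 1) := Real.Gamma_pos_of_pos (by linarith)
  nlinarith

/-- Uniqueness of the Esscher martingale parameter: `ψ(h) = m(h+1) − m(h)` is
continuous and strictly increasing on `(−λ₋, λ₊ − 1)`, hence for every `r` there is at
most one `h*` in `(−λ₋, λ₊ − 1)` with `ψ(h*) = r`. -/
theorem esscher_parameter_unique (μ βp βm αp αm lp lm : ℝ)
    (hβp0 : 0 < βp) (hβp1 : βp < 1) (hβm0 : 0 < βm) (hβm1 : βm < 1)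
    (hαp : 0 ≤ αp) (hαm : 0 ≤ αm) (hα : 0 < αp + αm)
    (hlm : 0 < lm) (hlp : 1 < lp) :
    ContinuousOn
      (fun h : ℝ => gtsCumulant μ βp βm αp αm lp lm (h + 1)
        - gtsCumulant μ βp βm αp αm lp lm h) (Set.Ioo (-lm) (lp - 1)) ∧
    StrictMonoOn
      (fun h : ℝ => gtsCumulant μ βp βm αp αm lp lm (h + 1)
        - gtsCumulant μ βp βm αp αm lp lm h) (Set.Ioo (-lm) (lp - 1)) ∧
    ∀ r : ℝ, ∀ h₁ ∈ Set.Ioo (-lm) (lp - 1), ∀ h₂ ∈ Set.Ioo (-lm) (lp - 1),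
      gtsCumulant μ βp βm αp αm lp lm (h₁ + 1) - gtsCumulant μ βp βm αp αm lp lm h₁ = r →
      gtsCumulant μ βp βm αp αm lp lm (h₂ + 1) - gtsCumulant μ βp βm αp αm lp lm h₂ = r →
      h₁ = h₂ := by
  have hΓp : Real.Gamma (-βp) < 0 := gamma_neg hβp0 hβp1
  have hΓm : Real.Gamma (-βm) < 0 := gamma_neg hβm0 hβm1
  have hcont : ContinuousOn
      (fun h : ℝ => gtsCumulant μ βp βm αp αm lp lm (h + 1)
        - gtsCumulant μ βp βm αp αm lp lm h) (Set.Ioo (-lm) (lp - 1)) := by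
    apply Continuous.continuousOn
    unfold gtsCumulant
    have cp := Real.continuous_rpow_const hβp0.le
    have cm := Real.continuous_rpow_const hβm0.le
    fun_prop
  have hmono : StrictMonoOn
      (fun h : ℝ => gtsCumulant μ βp βm αp αm lp lm (h + 1)
        - gtsCumulant μ βp βm αp αm lp lm h) (Set.Ioo (-lm) (lp - 1)) := by
    intro h₁ hm₁ h₂ hm₂ hlt
    obtain ⟨h₁l, h₁r⟩ := hm₁
    obtain ⟨h₂l, h₂r⟩ := hm₂
    -- plus part
    have hp : (lp - h₂ - 1) ^ βp - (lp - h₂) ^ βp < (lp - h₁ - 1) ^ βp - (lp - h₁) ^ βp := by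
      have := key_anti hβp0 hβp1 (show lp - h₂ - 1 ∈ Set.Ioi (0:ℝ) by simp; linarith)
        (show lp - h₁ - 1 ∈ Set.Ioi (0:ℝ) by simp; linarith) (by linarith)
      simp only [] at this
      have e1 : lp - h₂ - 1 + 1 = lp - h₂ := by ring
      have e2 : lp - h₁ - 1 + 1 = lp - h₁ := by ring
      rw [e1, e2] at this
      linarith
    have hm' : (lm + h₁ + 1) ^ βm - (lm + h₁) ^ βm > (lm + h₂ + 1) ^ βm - (lm + h₂) ^ βm := by
      have := key_anti hβm0 hβm1 (show lm + h₁ ∈ Set.Ioi (0:ℝ) by simp; linarith)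
        (show lm + h₂ ∈ Set.Ioi (0:ℝ) by simp; linarith) (by linarith)
      simpa using this
    -- weighted inequalities
    have hGp1 : Real.Gamma (-βp) * ((lp - h₁ - 1) ^ βp - (lp - h₁) ^ βp)
        < Real.Gamma (-βp) * ((lp - h₂ - 1) ^ βp - (lp - h₂) ^ βp) :=
      mul_lt_mul_of_neg_left hp hΓp
    have hGm1 : Real.Gamma (-βm) * ((lm + h₁ + 1) ^ βm - (lm + h₁) ^ βm)
        < Real.Gamma (-βm) * ((lm + h₂ + 1) ^ βm - (lm + h₂) ^ βm) :=
      mul_lt_mul_of_neg_left hm' hΓm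
    have Hp : αp * (Real.Gamma (-βp) * ((lp - h₁ - 1) ^ βp - (lp - h₁) ^ βp))
        ≤ αp * (Real.Gamma (-βp) * ((lp - h₂ - 1) ^ βp - (lp - h₂) ^ βp)) :=
      mul_le_mul_of_nonneg_left hGp1.le hαp
    have Hm : αm * (Real.Gamma (-βm) * ((lm + h₁ + 1) ^ βm - (lm + h₁) ^ βm))
        ≤ αm * (Real.Gamma (-βm) * ((lm + h₂ + 1) ^ βm - (lm + h₂) ^ βm)) :=
      mul_le_mul_of_nonneg_left hGm1.le hαm
    have Hstrict : αp * (Real.Gamma (-βp) * ((lp - h₁ - 1) ^ βp - (lp - h₁) ^ βp))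
          + αm * (Real.Gamma (-βm) * ((lm + h₁ + 1) ^ βm - (lm + h₁) ^ βm))
        < αp * (Real.Gamma (-βp) * ((lp - h₂ - 1) ^ βp - (lp - h₂) ^ βp))
          + αm * (Real.Gamma (-βm) * ((lm + h₂ + 1) ^ βm - (lm + h₂) ^ βm)) := by
      rcases lt_or_ge 0 αp with h | h
      · have := mul_lt_mul_of_pos_left hGp1 h
        linarith
      · have hαp0 : αp = 0 := le_antisymm h hαp
        have hαm0 : 0 < αm := by linarith
        have := mul_lt_mul_of_pos_left hGm1 hαm0
        linarith
    have expand : ∀ h : ℝ, gtsCumulant μ βp βm αp αm lp lm (h + 1)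
          - gtsCumulant μ βp βm αp αm lp lm h
        = μ + αp * (Real.Gamma (-βp) * ((lp - h - 1) ^ βp - (lp - h) ^ βp))
          + αm * (Real.Gamma (-βm) * ((lm + h + 1) ^ βm - (lm + h) ^ βm)) := by
      intro h
      have e1 : lp - (h + 1) = lp - h - 1 := by ring
      have e3 : lm + (h + 1) = lm + h + 1 := by ring
      simp only [gtsCumulant, e1, e3]
      ring
    simp only [expand]
    linarith
  refine ⟨hcont, hmono, ?_⟩
  intro r h₁ hm₁ h₂ hm₂ e₁ e₂
  exact hmono.injOn hm₁ hm₂ (by rw [e₁, e₂])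
end

section
/- Let k > 0 and let y be a complex number with Im(y) < −1. Then the function x ↦ e^{−iyx}·max(e^{x} − k, 0) is integrable on ℝ and ∫_ℝ e^{−iyx} max(e^{x} − k, 0) dx = k·e^{−iy·log k} / (iy·(iy − 1)). -/
open MeasureTheory Complex Set Filter

lemma cexp_hasDerivAt (c : ℂ) (x : ℝ) :
    HasDerivAt (fun x : ℝ => Complex.exp (c * x)) (c * Complex.exp (c * x)) x := by
  have := (((hasDerivAt_id (x : ℂ)).const_mul c).cexp).comp_ofReal
  simpa [mul_comm] using this

lemma cexp_integrableOn_Ioi {c : ℂ} (hc : c.re < 0) (a : ℝ) :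
    IntegrableOn (fun x : ℝ => Complex.exp (c * x)) (Ioi a) := by
  have hb : (0:ℝ) < -c.re := by linarith
  refine ((exp_neg_integrableOn_Ioi a hb).mono' ?_ ?_)
  · exact (Complex.continuous_exp.comp (continuous_const.mul Complex.continuous_ofReal)).aestronglyMeasurable
  · filter_upwards with x
    simp [Complex.norm_exp, Complex.mul_re]

lemma cexp_tendsto_zero {c : ℂ} (hc : c.re < 0) :
    Tendsto (fun x : ℝ => Complex.exp (c * x)) atTop (nhds 0) := by
  rw [tendsto_zero_iff_norm_tendsto_zero]
  have h1 : Tendsto (fun x : ℝ => c.re * x) atTop atBot :=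
    tendsto_id.const_mul_atTop_of_neg hc
  have := Real.tendsto_exp_atBot.comp h1
  refine this.congr fun x => ?_
  simp [Complex.norm_exp, Complex.mul_re]

lemma integral_cexp_Ioi {c : ℂ} (hc : c.re < 0) (a : ℝ) :
    ∫ x in Ioi a, Complex.exp (c * x) = -Complex.exp (c * a) / c := by
  have hc0 : c ≠ 0 := fun h => by simp [h] at hc
  have hderiv : ∀ x ∈ Ici a, HasDerivAt (fun x : ℝ => Complex.exp (c * x) / c)
      (Complex.exp (c * x)) x := by
    intro x _
    have := (cexp_hasDerivAt c x).div_const c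
    simpa [mul_div_assoc, mul_div_cancel_left₀ _ hc0] using this
  have htend : Tendsto (fun x : ℝ => Complex.exp (c * x) / c) atTop (nhds 0) := by
    simpa using (cexp_tendsto_zero hc).div_const c
  have := integral_Ioi_of_hasDerivAt_of_tendsto' hderiv (cexp_integrableOn_Ioi hc a) htend
  rw [this]
  ring

/-- Fourier transform of the call payoff: for `k > 0` and `Im(y) < −1`, the function
`x ↦ e^{−iyx}·max(e^{x} − k, 0)` is integrable on `ℝ` and
`∫_ℝ e^{−iyx} max(e^{x} − k, 0) dx = k·e^{−iy·log k} / (iy·(iy − 1))`. -/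
theorem call_payoff_fourier_transform (k : ℝ) (hk : 0 < k) (y : ℂ) (hy : y.im < -1) :
    Integrable (fun x : ℝ =>
      Complex.exp (-Complex.I * y * x) * ((max (Real.exp x - k) 0 : ℝ) : ℂ)) ∧
    ∫ x : ℝ, Complex.exp (-Complex.I * y * x) * ((max (Real.exp x - k) 0 : ℝ) : ℂ)
      = (k : ℂ) * Complex.exp (-Complex.I * y * (Real.log k : ℂ)) /
          (Complex.I * y * (Complex.I * y - 1)) := by
  set a := Real.log k with ha
  set f : ℝ → ℂ := fun x =>
    Complex.exp (-Complex.I * y * x) * ((max (Real.exp x - k) 0 : ℝ) : ℂ) with hf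
  set g : ℝ → ℂ := fun x =>
    Complex.exp ((1 - Complex.I * y) * x) - (k : ℂ) * Complex.exp ((-(Complex.I * y)) * x)
    with hg
  -- real part facts
  have h1re : (1 - Complex.I * y).re < 0 := by
    simp [Complex.sub_re, Complex.mul_re]; linarith
  have h2re : (-(Complex.I * y)).re < 0 := by
    simp [Complex.mul_re]; linarith
  have hiy0 : Complex.I * y ≠ 0 := by
    intro h
    have : (Complex.I * y).re = 0 := by rw [h]; simp
    simp [Complex.mul_re] at this; linarith
  have hiy1 : Complex.I * y - 1 ≠ 0 := by
    intro h
    have : (Complex.I * y - 1).re = 0 := by rw [h]; simp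
    simp [Complex.sub_re, Complex.mul_re] at this; linarith
  -- f vanishes off Ioi a, and equals g on Ioi a
  have hf_eq : f = Set.indicator (Ioi a) g := by
    funext x
    by_cases hx : x ∈ Ioi a
    · have hxk : k < Real.exp x := by
        rw [← Real.exp_log hk]; exact Real.exp_lt_exp.2 hx
      rw [Set.indicator_of_mem hx]
      have hmax : max (Real.exp x - k) 0 = Real.exp x - k := max_eq_left (by linarith)
      simp only [hf, hg, hmax, Complex.ofReal_sub, Complex.ofReal_exp]
      have e1 : (1 - Complex.I * y) * (x:ℂ) = -Complex.I * y * x + x := by ring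
      have e2 : (-(Complex.I * y)) * (x:ℂ) = -Complex.I * y * x := by ring
      rw [e1, e2, Complex.exp_add]
      ring
    · rw [Set.indicator_of_notMem hx]
      have hxa : x ≤ a := not_lt.1 hx
      have hxk : Real.exp x ≤ k := by
        rw [← Real.exp_log hk]; exact Real.exp_le_exp.2 hxa
      have hmax : max (Real.exp x - k) 0 = 0 := max_eq_right (by linarith)
      simp [hf, hmax]
  -- integrability of g on Ioi a
  have hgint : IntegrableOn g (Ioi a) :=
    (cexp_integrableOn_Ioi h1re a).sub ((cexp_integrableOn_Ioi h2re a).const_mul _)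
  -- integrability of f
  have hfint : Integrable f := by
    rw [hf_eq]
    exact (integrable_indicator_iff measurableSet_Ioi).2 hgint
  refine ⟨hfint, ?_⟩
  -- compute the integral
  have hint : ∫ x : ℝ, f x = ∫ x in Ioi a, g x := by
    rw [hf_eq, integral_indicator measurableSet_Ioi]
  have hI1 := integral_cexp_Ioi h1re a
  have hI2 := integral_cexp_Ioi h2re a
  have hsplit : ∫ x in Ioi a, g x =
      (∫ x in Ioi a, Complex.exp ((1 - Complex.I * y) * x))
      - (k : ℂ) * ∫ x in Ioi a, Complex.exp ((-(Complex.I * y)) * x) := by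
    rw [integral_sub (cexp_integrableOn_Ioi h1re a)
      ((cexp_integrableOn_Ioi h2re a).const_mul _), integral_const_mul]
  have hexpa : Complex.exp ((1 - Complex.I * y) * a)
      = (k : ℂ) * Complex.exp ((-(Complex.I * y)) * a) := by
    rw [sub_mul, one_mul, Complex.exp_sub]
    have : Complex.exp (a : ℂ) = (k : ℂ) := by
      rw [← Complex.ofReal_exp, ha, Real.exp_log hk]
    rw [this]
    rw [neg_mul, Complex.exp_neg]
    field_simp
  show ∫ x : ℝ, f x = _
  rw [hint, hsplit, hI1, hI2, hexpa]
  have hE : Complex.exp (-Complex.I * y * (a : ℂ)) = Complex.exp ((-(Complex.I * y)) * a) := by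
    ring_nf
  rw [hE]
  have h10 : (1 : ℂ) - Complex.I * y ≠ 0 := fun h =>
    hiy1 (by rw [sub_eq_zero] at h ⊢; exact h.symm)
  have hy0 : y ≠ 0 := fun h => hiy0 (by rw [h, mul_zero])
  field_simp
  ring
end

section
/- Let τ > 0, μ ∈ ℝ, β₊, β₋ ∈ (0,1), λ₊, λ₋ > 0, α₊ ≥ 0, α₋ ≥ 0 with α₊ + α₋ > 0. Then the GTS characteristic function ξ ↦ exp(τ·Ψ(ξ; μ, β₊, β₋, α₊, α₋, λ₊, λ₋)) is (absolutely) integrable on ℝ; in particular |exp(τΨ(ξ))| decays like exp(−cτ|ξ|^{β}) for some c > 0 as |ξ| → ∞, so the GTS distribution admits a continuous density given by Fourier inversion. -/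
open MeasureTheory Complex Set

/-- The GTS characteristic exponent
`Ψ(ξ) = iμξ + α₊Γ(−β₊)((λ₊ − iξ)^{β₊} − λ₊^{β₊}) + α₋Γ(−β₋)((λ₋ + iξ)^{β₋} − λ₋^{β₋})`,
with principal-branch complex powers. -/
noncomputable def gtsPsi (μ βp βm αp αm lp lm : ℝ) (ξ : ℝ) : ℂ :=
  Complex.I * μ * ξ
    + (αp : ℂ) * ((Real.Gamma (-βp) : ℝ) : ℂ) *
        (((lp : ℂ) - Complex.I * ξ) ^ (βp : ℂ) - (lp : ℂ) ^ (βp : ℂ))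
    + (αm : ℂ) * ((Real.Gamma (-βm) : ℝ) : ℂ) *
        (((lm : ℂ) + Complex.I * ξ) ^ (βm : ℂ) - (lm : ℂ) ^ (βm : ℂ))

namespace GtsAux

open Real Filter

lemma gamma_neg_neg {β : ℝ} (h0 : 0 < β) (h1 : β < 1) : Real.Gamma (-β) < 0 := by
  have h := Real.Gamma_add_one (s := -β) (by intro h; rw [neg_eq_zero] at h; linarith)
  have hpos : 0 < Real.Gamma (-β + 1) := Real.Gamma_pos_of_pos (by linarith)
  nlinarith [h, hpos]

lemma re_cpow {w : ℂ} (hw : 0 < w.re) (β : ℝ) :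
    (w ^ (β : ℂ)).re = ‖w‖ ^ β * Real.cos (β * w.arg) := by
  have hw0 : w ≠ 0 := by intro h; simp [h] at hw
  rw [Complex.cpow_def_of_ne_zero hw0, Complex.exp_re]
  have h1 : (Complex.log w * (β:ℂ)).re = Real.log ‖w‖ * β := by
    simp [Complex.mul_re, Complex.log_re]
  have h2 : (Complex.log w * (β:ℂ)).im = w.arg * β := by
    simp [Complex.mul_im, Complex.log_im]
  rw [h1, h2, ← Real.rpow_def_of_pos (norm_pos_iff.mpr hw0), mul_comm β]

lemma re_cpow_lb {w : ℂ} (hw : 0 < w.re) {β : ℝ} (h0 : 0 < β) (h1 : β < 1) :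
    |w.im| ^ β * Real.cos (β * (π/2)) ≤ (w ^ (β : ℂ)).re := by
  rw [re_cpow hw β]
  have harg : |w.arg| < π/2 := Complex.abs_arg_lt_pi_div_two_iff.2 (Or.inl hw)
  have hπ : (0:ℝ) < π/2 := by positivity
  have habs : |β * w.arg| ≤ β * (π/2) := by
    rw [abs_mul, abs_of_pos h0]
    exact mul_le_mul_of_nonneg_left harg.le h0.le
  have hβπ : β * (π/2) ≤ π/2 := by nlinarith
  have hcos : Real.cos (β * (π/2)) ≤ Real.cos (β * w.arg) := by
    rw [← Real.cos_abs (β * w.arg)]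
    exact Real.cos_le_cos_of_nonneg_of_le_pi (abs_nonneg _) (by nlinarith [Real.pi_pos]) habs
  have hcos0 : 0 ≤ Real.cos (β * (π/2)) :=
    Real.cos_nonneg_of_mem_Icc ⟨by nlinarith, hβπ⟩
  exact mul_le_mul (Real.rpow_le_rpow (abs_nonneg _) (Complex.abs_im_le_norm w) h0.le)
    hcos hcos0 (Real.rpow_nonneg (norm_nonneg _) _)

lemma cos_half_pi_mul_pos {β : ℝ} (h0 : 0 < β) (h1 : β < 1) : 0 < Real.cos (β * (π/2)) := by
  have hπ : (0:ℝ) < π/2 := by positivity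
  exact Real.cos_pos_of_mem_Ioo ⟨by nlinarith, by nlinarith⟩

lemma integrable_exp_neg_mul_abs_rpow {a β : ℝ} (ha : 0 < a) (hβ : 0 < β) :
    Integrable (fun x : ℝ => Real.exp (-a * |x| ^ β)) := by
  have hcont : Continuous fun x : ℝ => Real.exp (-a * |x| ^ β) :=
    Real.continuous_exp.comp (continuous_const.mul (continuous_abs.rpow_const fun x => Or.inr hβ.le))
  refine hcont.locallyIntegrable.integrable_of_isBigO_atTop_of_norm_isNegInvariant ?_ ?_
    ⟨Ioi 1, Ioi_mem_atTop 1, integrableOn_Ioi_rpow_of_lt (by norm_num : (-2:ℝ) < -1) one_pos⟩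
  · filter_upwards with x
    simp [Function.comp, abs_neg]
  · have h3 := ((isLittleO_exp_neg_mul_rpow_atTop ha (-2/β)).comp_tendsto
      (tendsto_rpow_atTop hβ)).isBigO
    refine h3.congr' ?_ ?_
    · filter_upwards [eventually_gt_atTop 0] with x hx
      simp [Function.comp, abs_of_pos hx]
    · filter_upwards [eventually_gt_atTop 0] with x hx
      simp only [Function.comp]
      rw [← Real.rpow_mul hx.le]
      congr 1
      field_simp

lemma gtsPsi_re (μ βp βm αp αm lp lm : ℝ) (hlp : 0 ≤ lp) (hlm : 0 ≤ lm) (ξ : ℝ) :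
    (gtsPsi μ βp βm αp αm lp lm ξ).re
      = αp * Real.Gamma (-βp) * ((((lp : ℂ) - Complex.I * ξ) ^ (βp : ℂ)).re - lp ^ βp)
      + αm * Real.Gamma (-βm) * ((((lm : ℂ) + Complex.I * ξ) ^ (βm : ℂ)).re - lm ^ βm) := by
  have e1 : ((lp : ℂ)) ^ ((βp : ℝ) : ℂ) = ((lp ^ βp : ℝ) : ℂ) := (Complex.ofReal_cpow hlp βp).symm
  have e2 : ((lm : ℂ)) ^ ((βm : ℝ) : ℂ) = ((lm ^ βm : ℝ) : ℂ) := (Complex.ofReal_cpow hlm βm).symm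
  simp only [gtsPsi, e1, e2, Complex.add_re, Complex.mul_re, Complex.mul_im, Complex.sub_re,
    Complex.ofReal_re, Complex.ofReal_im, Complex.I_re, Complex.I_im]
  ring

lemma gtsPsi_re_le (μ βp βm αp αm lp lm : ℝ)
    (hβp0 : 0 < βp) (hβp1 : βp < 1) (hβm0 : 0 < βm) (hβm1 : βm < 1)
    (hlp : 0 < lp) (hlm : 0 < lm) (hαp : 0 ≤ αp) (hαm : 0 ≤ αm) (ξ : ℝ) :
    (gtsPsi μ βp βm αp αm lp lm ξ).re
      ≤ (αp * (-Real.Gamma (-βp)) * lp ^ βp + αm * (-Real.Gamma (-βm)) * lm ^ βm)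
        - αp * (-Real.Gamma (-βp)) * Real.cos (βp * (π/2)) * |ξ| ^ βp
        - αm * (-Real.Gamma (-βm)) * Real.cos (βm * (π/2)) * |ξ| ^ βm := by
  rw [gtsPsi_re μ βp βm αp αm lp lm hlp.le hlm.le ξ]
  have hwp : (0:ℝ) < ((lp : ℂ) - Complex.I * ξ).re := by simpa using hlp
  have hwm : (0:ℝ) < ((lm : ℂ) + Complex.I * ξ).re := by simpa using hlm
  have hip : |((lp : ℂ) - Complex.I * ξ).im| = |ξ| := by simp
  have him : |((lm : ℂ) + Complex.I * ξ).im| = |ξ| := by simp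
  have hRp := re_cpow_lb hwp hβp0 hβp1
  have hRm := re_cpow_lb hwm hβm0 hβm1
  rw [hip] at hRp
  rw [him] at hRm
  have hΓp := gamma_neg_neg hβp0 hβp1
  have hΓm := gamma_neg_neg hβm0 hβm1
  have h1 : αp * Real.Gamma (-βp) * (((lp : ℂ) - Complex.I * ξ) ^ (βp : ℂ)).re
      ≤ αp * Real.Gamma (-βp) * (|ξ| ^ βp * Real.cos (βp * (π/2))) :=
    mul_le_mul_of_nonpos_left hRp (mul_nonpos_of_nonneg_of_nonpos hαp hΓp.le)
  have h2 : αm * Real.Gamma (-βm) * (((lm : ℂ) + Complex.I * ξ) ^ (βm : ℂ)).re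
      ≤ αm * Real.Gamma (-βm) * (|ξ| ^ βm * Real.cos (βm * (π/2))) :=
    mul_le_mul_of_nonpos_left hRm (mul_nonpos_of_nonneg_of_nonpos hαm hΓm.le)
  nlinarith [h1, h2]

lemma gtsPsi_continuous (μ βp βm αp αm lp lm : ℝ) (hlp : 0 < lp) (hlm : 0 < lm) :
    Continuous (gtsPsi μ βp βm αp αm lp lm) := by
  have h1 : Continuous fun ξ : ℝ => ((lp : ℂ) - Complex.I * ξ) := by continuity
  have h2 : Continuous fun ξ : ℝ => ((lm : ℂ) + Complex.I * ξ) := by continuity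
  have hc1 : Continuous fun ξ : ℝ => ((lp : ℂ) - Complex.I * ξ) ^ (βp : ℂ) :=
    h1.cpow continuous_const fun ξ => (Complex.mem_slitPlane_iff).2 (Or.inl (by simpa using hlp))
  have hc2 : Continuous fun ξ : ℝ => ((lm : ℂ) + Complex.I * ξ) ^ (βm : ℂ) :=
    h2.cpow continuous_const fun ξ => (Complex.mem_slitPlane_iff).2 (Or.inl (by simpa using hlm))
  unfold gtsPsi
  fun_prop

end GtsAux

open GtsAux Real in
/-- The GTS characteristic function `ξ ↦ exp(τΨ(ξ))` is absolutely integrable on `ℝ`;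
in particular `|exp(τΨ(ξ))|` decays like `exp(−cτ|ξ|^β)` for some `c > 0`, so the GTS
distribution admits a continuous density given by Fourier inversion. -/
theorem gts_char_fun_integrable (τ μ βp βm αp αm lp lm : ℝ) (hτ : 0 < τ)
    (hβp0 : 0 < βp) (hβp1 : βp < 1) (hβm0 : 0 < βm) (hβm1 : βm < 1)
    (hlp : 0 < lp) (hlm : 0 < lm) (hαp : 0 ≤ αp) (hαm : 0 ≤ αm) (hα : 0 < αp + αm) :
    Integrable (fun ξ : ℝ => Complex.exp ((τ : ℂ) * gtsPsi μ βp βm αp αm lp lm ξ)) ∧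
    ∃ β ∈ Set.Ioo (0 : ℝ) 1, ∃ c > (0 : ℝ), ∃ C > (0 : ℝ), ∀ ξ : ℝ,
      ‖Complex.exp ((τ : ℂ) * gtsPsi μ βp βm αp αm lp lm ξ)‖
        ≤ C * Real.exp (-c * τ * |ξ| ^ β) := by
  -- a uniform real-part bound with a single exponent
  obtain ⟨β, hβ, c, hc, K, hbound⟩ : ∃ β ∈ Set.Ioo (0:ℝ) 1, ∃ c > (0:ℝ), ∃ K : ℝ,
      ∀ ξ : ℝ, (gtsPsi μ βp βm αp αm lp lm ξ).re ≤ K - c * |ξ| ^ β := by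
    have hΓp := gamma_neg_neg hβp0 hβp1
    have hΓm := gamma_neg_neg hβm0 hβm1
    have hcp := cos_half_pi_mul_pos hβp0 hβp1
    have hcm := cos_half_pi_mul_pos hβm0 hβm1
    have hle := gtsPsi_re_le μ βp βm αp αm lp lm hβp0 hβp1 hβm0 hβm1 hlp hlm hαp hαm
    rcases hαp.lt_or_eq with h | h
    · refine ⟨βp, ⟨hβp0, hβp1⟩, αp * (-Real.Gamma (-βp)) * Real.cos (βp * (π/2)),
        mul_pos (mul_pos h (neg_pos.2 hΓp)) hcp, αp * (-Real.Gamma (-βp)) * lp ^ βp + αm * (-Real.Gamma (-βm)) * lm ^ βm,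
        fun ξ => ?_⟩
      have := hle ξ
      have hnn : 0 ≤ αm * (-Real.Gamma (-βm)) * Real.cos (βm * (π/2)) * |ξ| ^ βm :=
        mul_nonneg (mul_nonneg (mul_nonneg hαm (neg_pos.2 hΓm).le) hcm.le)
          (Real.rpow_nonneg (abs_nonneg _) _)
      linarith
    · have ham : 0 < αm := by linarith
      refine ⟨βm, ⟨hβm0, hβm1⟩, αm * (-Real.Gamma (-βm)) * Real.cos (βm * (π/2)),
        mul_pos (mul_pos ham (neg_pos.2 hΓm)) hcm, αp * (-Real.Gamma (-βp)) * lp ^ βp + αm * (-Real.Gamma (-βm)) * lm ^ βm,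
        fun ξ => ?_⟩
      have := hle ξ
      have hnn : 0 ≤ αp * (-Real.Gamma (-βp)) * Real.cos (βp * (π/2)) * |ξ| ^ βp :=
        mul_nonneg (mul_nonneg (mul_nonneg hαp (neg_pos.2 hΓp).le) hcp.le)
          (Real.rpow_nonneg (abs_nonneg _) _)
      linarith
  have hnorm : ∀ ξ : ℝ, ‖Complex.exp ((τ : ℂ) * gtsPsi μ βp βm αp αm lp lm ξ)‖
      ≤ Real.exp (τ * K) * Real.exp (-c * τ * |ξ| ^ β) := by
    intro ξ
    rw [Complex.norm_exp, ← Real.exp_add]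
    apply Real.exp_le_exp.2
    have hre : ((τ : ℂ) * gtsPsi μ βp βm αp αm lp lm ξ).re
        = τ * (gtsPsi μ βp βm αp αm lp lm ξ).re := by
      simp [Complex.mul_re]
    rw [hre]
    have := hbound ξ
    nlinarith [this, hτ.le]
  have hcont : Continuous fun ξ : ℝ => Complex.exp ((τ : ℂ) * gtsPsi μ βp βm αp αm lp lm ξ) :=
    Complex.continuous_exp.comp (continuous_const.mul (gtsPsi_continuous μ βp βm αp αm lp lm hlp hlm))
  constructor
  · have hg : Integrable (fun ξ : ℝ => Real.exp (τ * K) * Real.exp (-(c * τ) * |ξ| ^ β)) :=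
      (integrable_exp_neg_mul_abs_rpow (by positivity) hβ.1).const_mul _
    refine hg.mono' hcont.aestronglyMeasurable ?_
    filter_upwards with ξ
    have := hnorm ξ
    simpa [neg_mul, mul_assoc] using this
  · exact ⟨β, hβ, c, hc, Real.exp (τ * K), Real.exp_pos _, hnorm⟩
end
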